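/- Let CS be the class of compositions f = g_{L*} ∘ ⋯ ∘ g₁ ∘ g₀ where each coordinate g_{i,j} is (β_i, C_i)-Hölder smooth. Suppose h_i, h_i* : [0,1]^{r_i} → [0,1]^{r_{i+1}} are vector-valued functions whose coordinates h_{i,j} are (β_i, C̃_i)-Hölder smooth with β_i ∈ (0,1]. Then ‖h_{L*} ∘ ⋯ ∘ h₀ − h*_{L*} ∘ ⋯ ∘ h*₀‖_∞ ≤ K · ∑_{i=0}^{L*} (‖ |h_i − h_i*|_∞ ‖_∞)^{∏_{l=i+1}^{L*} β_l}, for a constant K depending only on the Hölder constants C̃_i, the dimensions, and the smoothness indices (with the convention that the empty product equals 1). -/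

import Mathlib

open Finset

/-- Composition of the layer maps `h_0, …, h_{n-1}`. -/
def compChain (r : ℕ → ℕ) (h : ∀ i, (Fin (r i) → ℝ) → (Fin (r (i + 1)) → ℝ)) :
    (n : ℕ) → (Fin (r 0) → ℝ) → (Fin (r n) → ℝ)
  | 0 => fun z => z
  | n + 1 => fun z => h n (compChain r h n z)

/-- Recursive constant used in the error propagation bound. -/
noncomputable def Kaux (r : ℕ → ℕ) (β C : ℕ → ℝ) : ℕ → ℝ :=
  Nat.rec 1 (fun m Km => max 1 (C (m + 1) * (Real.sqrt (r (m + 1)) * Km) ^ (β (m + 1))))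

lemma Kaux_one_le (r : ℕ → ℕ) (β C : ℕ → ℝ) : ∀ m, 1 ≤ Kaux r β C m
  | 0 => le_refl 1
  | _ + 1 => le_max_left _ _

lemma real_rpow_add_le {x y p : ℝ} (hx : 0 ≤ x) (hy : 0 ≤ y) (hp : 0 ≤ p) (hp1 : p ≤ 1) :
    (x + y) ^ p ≤ x ^ p + y ^ p := by
  lift x to NNReal using hx
  lift y to NNReal using hy
  have := NNReal.rpow_add_le_add_rpow x y hp hp1
  exact_mod_cast this

lemma sum_rpow_le {ι : Type*} (s : Finset ι) (f : ι → ℝ) (hf : ∀ i ∈ s, 0 ≤ f i) {p : ℝ}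
    (hp0 : 0 < p) (hp1 : p ≤ 1) :
    (∑ i ∈ s, f i) ^ p ≤ ∑ i ∈ s, (f i) ^ p := by
  induction s using Finset.cons_induction with
  | empty => simp [Real.zero_rpow hp0.ne']
  | cons a s ha ih =>
    rw [Finset.sum_cons, Finset.sum_cons]
    have hfa : 0 ≤ f a := hf a (Finset.mem_cons_self a s)
    have hfs : 0 ≤ ∑ i ∈ s, f i :=
      Finset.sum_nonneg fun i hi => hf i (Finset.mem_cons_of_mem hi)
    calc (f a + ∑ i ∈ s, f i) ^ p ≤ f a ^ p + (∑ i ∈ s, f i) ^ p :=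
          real_rpow_add_le hfa hfs hp0.le hp1
      _ ≤ f a ^ p + ∑ i ∈ s, (f i) ^ p := by
          gcongr
          exact ih fun i hi => hf i (Finset.mem_cons_of_mem hi)

/-- Multi-layer composition error propagation (Lemma 3 of Schmidt-Hieber,
specialized to `β_i ≤ 1`): if the coordinates of each layer `h_i` are
`(β_i, C̃_i)`-Hölder smooth maps of `[0,1]^{r_i}` into `[0,1]^{r_{i+1}}` and
`h_i, h_i*` differ by at most `δ_i` componentwise, then the compositions differ
by at most `K ∑_{i=0}^{L*} δ_i^{∏_{l=i+1}^{L*} β_l}` in sup norm, for a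
constant `K` depending only on the Hölder data. -/
theorem compChain_error (Lstar : ℕ) (r : ℕ → ℕ) (β C : ℕ → ℝ)
    (hβ : ∀ i, β i ∈ Set.Ioc (0 : ℝ) 1) (hC : ∀ i, 0 < C i) :
    ∃ K > 0, ∀ (h h' : ∀ i, (Fin (r i) → ℝ) → (Fin (r (i + 1)) → ℝ)) (δ : ℕ → ℝ),
      (∀ i ≤ Lstar, ∀ z : Fin (r i) → ℝ, (∀ k, z k ∈ Set.Icc (0 : ℝ) 1) →
        ∀ j, h i z j ∈ Set.Icc (0 : ℝ) 1) →
      (∀ i ≤ Lstar, ∀ z : Fin (r i) → ℝ, (∀ k, z k ∈ Set.Icc (0 : ℝ) 1) →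
        ∀ j, h' i z j ∈ Set.Icc (0 : ℝ) 1) →
      (∀ i ≤ Lstar, ∀ j, ∀ x y : Fin (r i) → ℝ,
        (∀ k, x k ∈ Set.Icc (0 : ℝ) 1) → (∀ k, y k ∈ Set.Icc (0 : ℝ) 1) →
        |h i x j - h i y j| ≤ C i * (Real.sqrt (∑ k, (x k - y k) ^ 2)) ^ (β i)) →
      (∀ i, 0 ≤ δ i) →
      (∀ i ≤ Lstar, ∀ z : Fin (r i) → ℝ, (∀ k, z k ∈ Set.Icc (0 : ℝ) 1) →
        ∀ j, |h i z j - h' i z j| ≤ δ i) →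
      ∀ z : Fin (r 0) → ℝ, (∀ k, z k ∈ Set.Icc (0 : ℝ) 1) →
        ∀ j, |compChain r h (Lstar + 1) z j - compChain r h' (Lstar + 1) z j| ≤
          K * ∑ i ∈ Finset.range (Lstar + 1),
            (δ i) ^ (∏ l ∈ Finset.Ioc i Lstar, β l) := by
  refine ⟨Kaux r β C Lstar, lt_of_lt_of_le one_pos (Kaux_one_le r β C Lstar), ?_⟩
  intro h h' δ hrange hrange' hHolder hδ0 hdiff z hz j
  -- compositions stay in the unit cube
  have hcube : ∀ n, n ≤ Lstar + 1 → ∀ k, compChain r h n z k ∈ Set.Icc (0 : ℝ) 1 := by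
    intro n
    induction n with
    | zero => intro _ k; exact hz k
    | succ n ih =>
      intro hn k
      exact hrange n (by omega) _ (ih (by omega)) k
  have hcube' : ∀ n, n ≤ Lstar + 1 → ∀ k, compChain r h' n z k ∈ Set.Icc (0 : ℝ) 1 := by
    intro n
    induction n with
    | zero => intro _ k; exact hz k
    | succ n ih =>
      intro hn k
      exact hrange' n (by omega) _ (ih (by omega)) k
  have main : ∀ m, m ≤ Lstar → ∀ j,
      |compChain r h (m + 1) z j - compChain r h' (m + 1) z j| ≤
        Kaux r β C m * ∑ i ∈ Finset.range (m + 1),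
          (δ i) ^ (∏ l ∈ Finset.Ioc i m, β l) := by
    intro m
    induction m with
    | zero =>
      intro _ j
      have := hdiff 0 (Nat.zero_le _) z hz j
      calc |compChain r h (0 + 1) z j - compChain r h' (0 + 1) z j| ≤ δ 0 := this
        _ = Kaux r β C 0 * ∑ i ∈ Finset.range (0 + 1), (δ i) ^ (∏ l ∈ Finset.Ioc i 0, β l) := by
            rw [Finset.range_one, Finset.sum_singleton, Finset.Ioc_self, Finset.prod_empty,
              Real.rpow_one]
            show δ 0 = 1 * δ 0
            rw [one_mul]
    | succ m ih =>
      intro hm j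
      have hm' : m ≤ Lstar := by omega
      set x := compChain r h (m + 1) z with hxdef
      set y := compChain r h' (m + 1) z with hydef
      have hx : ∀ k, x k ∈ Set.Icc (0 : ℝ) 1 := hcube (m + 1) (by omega)
      have hy : ∀ k, y k ∈ Set.Icc (0 : ℝ) 1 := hcube' (m + 1) (by omega)
      set S : ℝ := ∑ i ∈ Finset.range (m + 1), (δ i) ^ (∏ l ∈ Finset.Ioc i m, β l) with hSdef
      have hS0 : 0 ≤ S :=
        Finset.sum_nonneg fun i _ => Real.rpow_nonneg (hδ0 i) _
      have hK1 : (1 : ℝ) ≤ Kaux r β C m := Kaux_one_le r β C m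
      have hKS0 : 0 ≤ Kaux r β C m * S := mul_nonneg (by linarith) hS0
      have hxy : ∀ k, |x k - y k| ≤ Kaux r β C m * S := ih hm'
      have hβ1 := hβ (m + 1)
      obtain ⟨hβpos, hβle⟩ := hβ1
      -- bound on the euclidean distance
      have hsum : (∑ k, (x k - y k) ^ 2) ≤ (r (m + 1)) * (Kaux r β C m * S) ^ 2 := by
        calc (∑ k, (x k - y k) ^ 2) ≤ ∑ _k : Fin (r (m + 1)), (Kaux r β C m * S) ^ 2 := by
              apply Finset.sum_le_sum
              intro k _
              rw [← sq_abs]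
              exact pow_le_pow_left₀ (abs_nonneg _) (hxy k) 2
          _ = (r (m + 1)) * (Kaux r β C m * S) ^ 2 := by
              rw [Finset.sum_const, Finset.card_univ, Fintype.card_fin, nsmul_eq_mul]
      have hsqrt : Real.sqrt (∑ k, (x k - y k) ^ 2) ≤
          Real.sqrt (r (m + 1)) * (Kaux r β C m * S) := by
        calc Real.sqrt (∑ k, (x k - y k) ^ 2) ≤
            Real.sqrt ((r (m + 1)) * (Kaux r β C m * S) ^ 2) := Real.sqrt_le_sqrt hsum
          _ = Real.sqrt (r (m + 1)) * (Kaux r β C m * S) := by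
              rw [Real.sqrt_mul (Nat.cast_nonneg _), Real.sqrt_sq hKS0]
      -- Hölder step
      have hH := hHolder (m + 1) hm j x y hx hy
      have hrpow : (Real.sqrt (∑ k, (x k - y k) ^ 2)) ^ (β (m + 1)) ≤
          ((Real.sqrt (r (m + 1)) * Kaux r β C m) ^ (β (m + 1))) *
            ∑ i ∈ Finset.range (m + 1), (δ i) ^ (∏ l ∈ Finset.Ioc i (m + 1), β l) := by
        have h1 : (Real.sqrt (∑ k, (x k - y k) ^ 2)) ^ (β (m + 1)) ≤
            ((Real.sqrt (r (m + 1)) * Kaux r β C m) * S) ^ (β (m + 1)) := by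
          apply Real.rpow_le_rpow (Real.sqrt_nonneg _) _ hβpos.le
          rw [mul_assoc]
          exact hsqrt
        have hK0' : 0 ≤ Real.sqrt (r (m + 1)) * Kaux r β C m :=
          mul_nonneg (Real.sqrt_nonneg _) (by linarith)
        rw [Real.mul_rpow hK0' hS0] at h1
        refine h1.trans ?_
        apply mul_le_mul_of_nonneg_left _ (Real.rpow_nonneg hK0' _)
        calc S ^ (β (m + 1)) ≤
            ∑ i ∈ Finset.range (m + 1), ((δ i) ^ (∏ l ∈ Finset.Ioc i m, β l)) ^ (β (m + 1)) :=
              sum_rpow_le _ _ (fun i _ => Real.rpow_nonneg (hδ0 i) _) hβpos hβle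
          _ = ∑ i ∈ Finset.range (m + 1), (δ i) ^ (∏ l ∈ Finset.Ioc i (m + 1), β l) := by
              apply Finset.sum_congr rfl
              intro i hi
              rw [Finset.mem_range] at hi
              rw [Finset.prod_Ioc_succ_top (by omega : i ≤ m), Real.rpow_mul (hδ0 i)]
      -- put things together
      have htri : |compChain r h (m + 1 + 1) z j - compChain r h' (m + 1 + 1) z j| ≤
          |h (m + 1) x j - h (m + 1) y j| + |h (m + 1) y j - h' (m + 1) y j| := by
        show |h (m + 1) x j - h' (m + 1) y j| ≤ _
        exact abs_sub_le _ _ _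
      have hd := hdiff (m + 1) hm y hy j
      set T : ℝ := ∑ i ∈ Finset.range (m + 1), (δ i) ^ (∏ l ∈ Finset.Ioc i (m + 1), β l)
        with hTdef
      have hT0 : 0 ≤ T := Finset.sum_nonneg fun i _ => Real.rpow_nonneg (hδ0 i) _
      have hKm1 : Kaux r β C (m + 1) =
          max 1 (C (m + 1) * (Real.sqrt (r (m + 1)) * Kaux r β C m) ^ (β (m + 1))) := rfl
      have hcoef : C (m + 1) * (Real.sqrt (r (m + 1)) * Kaux r β C m) ^ (β (m + 1)) ≤
          Kaux r β C (m + 1) := by rw [hKm1]; exact le_max_right _ _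
      have hone : (1 : ℝ) ≤ Kaux r β C (m + 1) := Kaux_one_le r β C (m + 1)
      have hδlast : δ (m + 1) = (δ (m + 1)) ^ (∏ l ∈ Finset.Ioc (m + 1) (m + 1), β l) := by
        rw [Finset.Ioc_self, Finset.prod_empty, Real.rpow_one]
      calc |compChain r h (m + 1 + 1) z j - compChain r h' (m + 1 + 1) z j| ≤
            |h (m + 1) x j - h (m + 1) y j| + |h (m + 1) y j - h' (m + 1) y j| := htri
        _ ≤ C (m + 1) * (Real.sqrt (∑ k, (x k - y k) ^ 2)) ^ (β (m + 1)) + δ (m + 1) :=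
            add_le_add hH hd
        _ ≤ C (m + 1) * (((Real.sqrt (r (m + 1)) * Kaux r β C m) ^ (β (m + 1))) * T)
              + δ (m + 1) := by
            have := mul_le_mul_of_nonneg_left hrpow (hC (m + 1)).le
            linarith
        _ = (C (m + 1) * (Real.sqrt (r (m + 1)) * Kaux r β C m) ^ (β (m + 1))) * T
              + δ (m + 1) := by ring
        _ ≤ Kaux r β C (m + 1) * T +
              Kaux r β C (m + 1) * (δ (m + 1)) ^ (∏ l ∈ Finset.Ioc (m + 1) (m + 1), β l) := by
            have h1 : (C (m + 1) * (Real.sqrt (r (m + 1)) * Kaux r β C m) ^ (β (m + 1))) * T ≤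
                Kaux r β C (m + 1) * T := mul_le_mul_of_nonneg_right hcoef hT0
            have h2 : δ (m + 1) ≤
                Kaux r β C (m + 1) * (δ (m + 1)) ^ (∏ l ∈ Finset.Ioc (m + 1) (m + 1), β l) := by
              rw [← hδlast]
              nlinarith [hδ0 (m + 1)]
            linarith
        _ = Kaux r β C (m + 1) * ∑ i ∈ Finset.range (m + 1 + 1),
              (δ i) ^ (∏ l ∈ Finset.Ioc i (m + 1), β l) := by
            rw [Finset.sum_range_succ, mul_add, hTdef]
  exact main Lstar le_rfl j
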